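/- Let τ > 0 and q ∈ (0,1]. On Ω = ℝ × ℝ equipped with the product measure μ = γ ⊗ γ of two standard Gaussians, define λ(ω₁,ω₂) = √q·ω₁ and ν(ω₁,ω₂) = λ(ω₁,ω₂) + √(1 − q)·ω₂, so that (ν, λ) is centered jointly Gaussian with Var ν = 1, Var λ = q and Cov(ν,λ) = q. Let F be the σ-algebra generated by λ. Then μ-almost everywhere, μ[σ⋆(ν/τ) | F] = σ⋆( λ / √(τ² + 1 − q) ). In other words, the Bayes-optimal confidence f_bo := σ⋆(λ/√(τ² + 1 − q)) is perfectly calibrated with respect to the teacher confidence σ⋆(ν/τ): Δ_p(f_bo) = 0 for all p ∈ (0,1). -/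

import Mathlib

/-!
Conditioning on `λ = √q ω₁` is conditioning on `ω₁`, so the conditional expectation is the
integral over `ω₂` alone. Since `σ⋆` is the CDF of `γ`, for `Z ~ γ` we have
`σ⋆((a + c y)/τ) = P(τ Z - c y ≤ a)`; averaging over `y ~ γ` gives `P(τ Z - c Y ≤ a)` for
independent `Z, Y ~ γ`, and `τ Z - c Y ~ N(0, τ² + c²)`; here `a = λ` and `c = √(1 - q)`.
-/

open MeasureTheory ProbabilityTheory Real

noncomputable def erf (x : ℝ) : ℝ := 2 / Real.sqrt Real.pi * ∫ t in (0:ℝ)..x, Real.exp (-t ^ 2)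

noncomputable def erfc (x : ℝ) : ℝ := 1 - erf x

noncomputable def sigmaStar (x : ℝ) : ℝ := (1 / 2) * erfc (-x / Real.sqrt 2)

theorem erf_neg (x : ℝ) : erf (-x) = -erf x := by
  have h : ∫ t in (0:ℝ)..-x, exp (-t ^ 2) = -∫ t in (0:ℝ)..x, exp (-t ^ 2) := by
    have := intervalIntegral.integral_comp_neg (a := 0) (b := x) fun t => exp (-t ^ 2)
    simp only [even_two, Even.neg_pow, neg_zero] at this
    rw [this, intervalIntegral.integral_symm]
  rw [erf, erf, h, mul_neg]

theorem sigmaStar_eq_half_add_erf (x : ℝ) : sigmaStar x = 1 / 2 + erf (x / √2) / 2 := by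
  rw [sigmaStar, erfc, neg_div, erf_neg]
  ring

theorem intervalIntegral_gaussianPDFReal_zero_eq_erf {v : NNReal} (hv : v ≠ 0) (x : ℝ) :
    ∫ t in (0:ℝ)..x, gaussianPDFReal 0 v t = erf (x / √(2 * v)) / 2 := by
  have hs : 0 < √(2 * (v : ℝ)) := by positivity
  have hpdf : ∀ t, gaussianPDFReal 0 v t = (√(2 * π * v))⁻¹ * exp (-(t / √(2 * v)) ^ 2) := by
    intro t
    simp only [gaussianPDFReal_def, div_pow, sq_sqrt (by positivity : (0:ℝ) ≤ 2 * v), sub_zero,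
      neg_div]
  simp_rw [hpdf, intervalIntegral.integral_const_mul,
    intervalIntegral.integral_comp_div (fun u => exp (-u ^ 2)) hs.ne', zero_div, smul_eq_mul, erf]
  rw [show 2 * π * (v : ℝ) = π * (2 * v) by ring, sqrt_mul pi_pos.le]
  field_simp

theorem gaussianReal_real_Iic_zero {v : NNReal} (hv : v ≠ 0) :
    (gaussianReal 0 v).real (Set.Iic 0) = 1 / 2 := by
  have := nullSingletonClass_gaussianReal (μ := 0) hv
  have hsymm : (gaussianReal 0 v).real (Set.Iic 0) = (gaussianReal 0 v).real (Set.Ioi 0) := by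
    conv_lhs => rw [← neg_zero, ← gaussianReal_map_neg]
    rw [map_measureReal_apply measurable_neg measurableSet_Iic, Set.neg_preimage, Set.neg_Iic,
      neg_zero, neg_zero, measureReal_congr Ioi_ae_eq_Ici.symm]
  have hcompl := probReal_compl_eq_one_sub (μ := gaussianReal 0 v) (measurableSet_Iic (a := 0))
  rw [Set.compl_Iic] at hcompl
  linarith

theorem gaussianReal_real_Iic {v : NNReal} (hv : v ≠ 0) (x : ℝ) :
    (gaussianReal 0 v).real (Set.Iic x) = sigmaStar (x / √v) := by
  have hint := fun y => (integrable_gaussianPDFReal 0 v).integrableOn (s := Set.Iic y)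
  have hIic : ∀ y,
      (gaussianReal 0 v).real (Set.Iic y) = ∫ t in Set.Iic y, gaussianPDFReal 0 v t := by
    intro y
    rw [measureReal_def, gaussianReal_apply_eq_integral _ hv, ENNReal.toReal_ofReal
      (setIntegral_nonneg measurableSet_Iic fun t _ => gaussianPDFReal_nonneg _ _ _)]
  rw [sigmaStar_eq_half_add_erf, ← gaussianReal_real_Iic_zero hv, div_div,
    ← sqrt_mul' _ zero_le_two, mul_comm (v : ℝ), ← intervalIntegral_gaussianPDFReal_zero_eq_erf hv,
    hIic, hIic,
    ← intervalIntegral.integral_Iic_sub_Iic (hint 0) (hint x)]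
  ring

theorem sigmaStar_eq_cdf : sigmaStar = cdf (gaussianReal 0 1) := by
  ext x
  rw [cdf_eq_real, gaussianReal_real_Iic one_ne_zero, NNReal.coe_one, sqrt_one, div_one]

theorem measurable_sigmaStar : Measurable sigmaStar :=
  sigmaStar_eq_cdf ▸ (monotone_cdf _).measurable

theorem integrable_sigmaStar_comp {α : Type*} [MeasurableSpace α] {μ : Measure α}
    [IsFiniteMeasure μ] {g : α → ℝ} (hg : Measurable g) :
    Integrable (fun ω => sigmaStar (g ω)) μ := by
  refine .of_bound (measurable_sigmaStar.comp hg).aestronglyMeasurable 1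
    (ae_of_all _ fun ω => ?_)
  rw [sigmaStar_eq_cdf, norm_of_nonneg (cdf_nonneg _ _)]
  exact cdf_le_one _ _

theorem measureReal_prod_apply_symm {α β : Type*} [MeasurableSpace α] [MeasurableSpace β]
    {μ : Measure α} {ν : Measure β} [IsFiniteMeasure μ] [IsFiniteMeasure ν]
    {s : Set (α × β)} (hs : MeasurableSet s) :
    (μ.prod ν).real s = ∫ y, μ.real ((fun x => (x, y)) ⁻¹' s) ∂ν := by
  simp_rw [measureReal_def]
  rw [Measure.prod_apply_symm hs, integral_toReal
    (measurable_measure_prodMk_right hs).aemeasurable (ae_of_all _ fun _ => measure_lt_top _ _)]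

theorem gaussianReal_prod_map_linear (a b : ℝ) :
    ((gaussianReal 0 1).prod (gaussianReal 0 1)).map (fun p : ℝ × ℝ => a * p.1 + b * p.2)
      = gaussianReal 0 (a ^ 2 + b ^ 2).toNNReal := by
  have hmarg : ∀ c : ℝ, (gaussianReal 0 1).map (c * ·) = gaussianReal 0 (c ^ 2).toNNReal := by
    intro c
    rw [gaussianReal_map_const_mul, mul_zero, mul_one]
    congr 1
    ext
    simp [sq_nonneg]
  have hfst : ((gaussianReal 0 1).prod (gaussianReal 0 1)).map (fun p : ℝ × ℝ => a * p.1)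
      = gaussianReal 0 (a ^ 2).toNNReal := by
    rw [show (fun p : ℝ × ℝ => a * p.1) = (a * ·) ∘ Prod.fst from rfl,
      ← Measure.map_map (measurable_const_mul a) measurable_fst, Measure.map_fst_prod,
      measure_univ, one_smul, hmarg]
  have hsnd : ((gaussianReal 0 1).prod (gaussianReal 0 1)).map (fun p : ℝ × ℝ => b * p.2)
      = gaussianReal 0 (b ^ 2).toNNReal := by
    rw [show (fun p : ℝ × ℝ => b * p.2) = (b * ·) ∘ Prod.snd from rfl,
      ← Measure.map_map (measurable_const_mul b) measurable_snd, Measure.map_snd_prod,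
      measure_univ, one_smul, hmarg]
  have h := gaussianReal_add_gaussianReal_of_indepFun
    (indepFun_prod (measurable_const_mul a) (measurable_const_mul b)) hfst hsnd
  rwa [add_zero, ← Real.toNNReal_add (sq_nonneg a) (sq_nonneg b)] at h

theorem integral_sigmaStar_affine {τ : ℝ} (hτ : 0 < τ) (a c : ℝ) :
    ∫ y, sigmaStar ((a + c * y) / τ) ∂(gaussianReal 0 1) = sigmaStar (a / √(τ ^ 2 + c ^ 2)) := by
  set S : Set (ℝ × ℝ) := (fun p => τ * p.1 + -c * p.2) ⁻¹' Set.Iic a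
  have hS : MeasurableSet S := measurableSet_Iic.preimage (by fun_prop)
  have hsection : ∀ y,
      sigmaStar ((a + c * y) / τ) = (gaussianReal 0 1).real ((fun x => (x, y)) ⁻¹' S) := by
    intro y
    rw [sigmaStar_eq_cdf, cdf_eq_real]
    congr 1
    ext x
    simp [S, le_div_iff₀ hτ, mul_comm τ]
  have hv : 0 < τ ^ 2 + (-c) ^ 2 := by positivity
  simp_rw [hsection]
  rw [← measureReal_prod_apply_symm hS, ← map_measureReal_apply (by fun_prop) measurableSet_Iic,
    gaussianReal_prod_map_linear, gaussianReal_real_Iic (by simpa using hv),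
    Real.coe_toNNReal _ hv.le, neg_sq]

theorem condExp_comap_fst_prod_ae_eq_integral {α β E : Type*} [MeasurableSpace α]
    [MeasurableSpace β] [NormedAddCommGroup E] [NormedSpace ℝ E] [CompleteSpace E]
    {μ : Measure α} {ν : Measure β} [IsFiniteMeasure μ] [IsProbabilityMeasure ν]
    {f : α × β → E} (hf : Integrable f (μ.prod ν)) :
    (μ.prod ν)[f | MeasurableSpace.comap Prod.fst ‹_›]
      =ᵐ[μ.prod ν] fun ω => ∫ y, f (ω.1, y) ∂ν := by
  have hint : Integrable (fun ω : α × β => ∫ y, f (ω.1, y) ∂ν) (μ.prod ν) :=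
    hf.integral_prod_left.comp_fst ν
  refine (ae_eq_condExp_of_forall_setIntegral_eq measurable_fst.comap_le hf
    (fun s _ _ => hint.integrableOn) ?_ ?_).symm
  · rintro s ⟨t, ht, rfl⟩ -
    rw [← Set.prod_univ, setIntegral_prod _ hint.integrableOn, setIntegral_prod _ hf.integrableOn]
    simp
  · have hmap : (μ.prod ν).map Prod.fst = μ := by
      rw [Measure.map_fst_prod, measure_univ, one_smul]
    exact (hmap ▸ hf.integral_prod_left.aestronglyMeasurable).comp_ae_measurable'
      measurable_fst.aemeasurable

/-- For a jointly Gaussian pair `(ν, λ)` with `Var ν = 1`, `Var λ = q`, `Cov(ν, λ) = q`,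
realized on the product of two standard Gaussians, the conditional expectation of the teacher
confidence `σ⋆(ν/τ)` given `λ` is exactly the Bayes-optimal confidence `σ⋆(λ/√(τ² + 1 − q))`:
the Bayes-optimal classifier is perfectly calibrated. -/
theorem condexp_teacher_given_bayes
    (τ q : ℝ) (hτ : 0 < τ) (hq : 0 < q) (hq1 : q ≤ 1)
    (μ : Measure (ℝ × ℝ)) (hμ : μ = (gaussianReal 0 1).prod (gaussianReal 0 1))
    (lam ν : ℝ × ℝ → ℝ)
    (hlam : lam = fun ω => Real.sqrt q * ω.1)
    (hν : ν = fun ω => lam ω + Real.sqrt (1 - q) * ω.2)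
    (F : MeasurableSpace (ℝ × ℝ))
    (hF : F = MeasurableSpace.comap lam (inferInstance : MeasurableSpace ℝ)) :
    μ[(fun ω => sigmaStar (ν ω / τ)) | F]
      =ᵐ[μ] fun ω => sigmaStar (lam ω / Real.sqrt (τ ^ 2 + 1 - q)) := by
  subst hμ hν hF hlam
  have hF : MeasurableSpace.comap (fun ω : ℝ × ℝ => √q * ω.1) (inferInstance : MeasurableSpace ℝ)
      = MeasurableSpace.comap Prod.fst inferInstance := by
    rw [show (fun ω : ℝ × ℝ => √q * ω.1) = (√q * ·) ∘ Prod.fst from rfl,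
      ← MeasurableSpace.comap_comp, (measurableEmbedding_mulLeft₀ (sqrt_pos.2 hq).ne').comap_eq]
  have hint := integrable_sigmaStar_comp (μ := (gaussianReal 0 1).prod (gaussianReal 0 1))
    (g := fun ω => (√q * ω.1 + √(1 - q) * ω.2) / τ) (by fun_prop)
  rw [hF]
  filter_upwards [condExp_comap_fst_prod_ae_eq_integral hint] with ω hω
  rw [hω, integral_sigmaStar_affine hτ, sq_sqrt (by linarith), add_sub_assoc]
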